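/- Let w be a CCS. Suppose (T_i)_{0≤i≤m} is a finite sequence of d(w)-windows for w such that T_{i+1} is a continuation of T_i for w for every i < m, and suppose there are indices h and δ with δ ≥ 1 and h + δ ≤ m such that T_h = T_{h+δ}. Then there exists an ∞-window for w. -/
import Mathlib


/-- Bimodal formulas over a countable set of atoms. -/
inductive Fm : Type
  | atom : ℕ → Fm
  | bot  : Fm
  | neg  : Fm → Fm
  | conj : Fm → Fm → Fm
  | boxa : Fm → Fm
  | boxb : Fm → Fm
deriving DecidableEq

open Fm

/-- Modal degree (maximal nesting depth of the modal operators). -/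
def deg : Fm → ℕ
  | .atom _ => 0
  | .bot => 0
  | .neg φ => deg φ
  | .conj φ ψ => max (deg φ) (deg ψ)
  | .boxa φ => deg φ + 1
  | .boxb φ => deg φ + 1

/-- Degree of a finite set of formulas (0 for the empty set). -/
def degS (w : Finset Fm) : ℕ := w.sup deg

/-- `CSF w`: least set of formulas containing `w` and closed under the
classical saturation rules. -/
inductive CSF (w : Finset Fm) : Fm → Prop
  | base {φ} : φ ∈ w → CSF w φ
  | andl {φ ψ} : CSF w (conj φ ψ) → CSF w φ
  | andr {φ ψ} : CSF w (conj φ ψ) → CSF w ψ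
  | nandl {φ ψ} : CSF w (neg (conj φ ψ)) → CSF w (neg φ)
  | nandr {φ ψ} : CSF w (neg (conj φ ψ)) → CSF w (neg ψ)
  | negE {φ} : CSF w (neg φ) → CSF w φ

/-- `CCS u`: the set of consistent classical saturations of `u`. -/
def CCS (u : Finset Fm) : Set (Finset Fm) :=
  { w | u ⊆ w ∧ (∀ φ ∈ w, CSF u φ) ∧
    (∀ φ ψ : Fm, conj φ ψ ∈ w → φ ∈ w ∧ ψ ∈ w) ∧
    (∀ φ ψ : Fm, neg (conj φ ψ) ∈ w → neg φ ∈ w ∨ neg ψ ∈ w) ∧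
    (∀ φ : Fm, neg (neg φ) ∈ w → φ ∈ w) ∧
    bot ∉ w ∧
    (∀ φ : Fm, neg φ ∈ w → φ ∉ w) }

/-- Plain unboxing `□ₐ⁻(w) = {φ : □ₐφ ∈ w}`. -/
def unboxa (w : Finset Fm) : Finset Fm :=
  w.biUnion (fun φ => match φ with | .boxa ψ => {ψ} | _ => ∅)

/-- Plain unboxing `□_b⁻(w) = {φ : □_bφ ∈ w}`. -/
def unboxb (w : Finset Fm) : Finset Fm :=
  w.biUnion (fun φ => match φ with | .boxb ψ => {ψ} | _ => ∅)

/-- Transitive unboxing `□ₐ⁻⁴(w) = {φ, □ₐφ : □ₐφ ∈ w}`. -/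
def unboxa4 (w : Finset Fm) : Finset Fm :=
  w.biUnion (fun φ => match φ with | .boxa ψ => {ψ, .boxa ψ} | _ => ∅)

/-- Transitive unboxing `□_b⁻⁴(w) = {φ, □_bφ : □_bφ ∈ w}`. -/
def unboxb4 (w : Finset Fm) : Finset Fm :=
  w.biUnion (fun φ => match φ with | .boxb ψ => {ψ, .boxb ψ} | _ => ∅)

/-- Standard Kripke satisfaction in a bimodal model `(W, Ra, Rb, V)`. -/
def Sat {W : Type} (Ra Rb : W → W → Prop) (V : ℕ → W → Prop) : W → Fm → Prop
  | x, .atom p => V p x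
  | _, .bot => False
  | x, .neg φ => ¬ Sat Ra Rb V x φ
  | x, .conj φ ψ => Sat Ra Rb V x φ ∧ Sat Ra Rb V x ψ
  | x, .boxa φ => ∀ y, Ra x y → Sat Ra Rb V y φ
  | x, .boxb φ => ∀ y, Rb x y → Sat Ra Rb V y φ

/-- `(ws 0, …, ws k)` is a `k`-window for `w`. -/
def IsWindow (w : Finset Fm) (k : ℕ) (ws : ℕ → Finset Fm) : Prop :=
  ws k ∈ CCS (unboxa w) ∧ ∀ i < k, ws i ∈ CCS (unboxa w ∪ unboxb (ws (i + 1)))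

/-! ### Auxiliary machinery for Statement 11 -/

lemma memUnboxa {s : Finset Fm} {x : Fm} : x ∈ unboxa s ↔ boxa x ∈ s := by
  constructor
  · intro hx
    rcases Finset.mem_biUnion.1 hx with ⟨φ, hφ, hm⟩
    cases φ <;> simp_all
  · intro hx
    exact Finset.mem_biUnion.2 ⟨boxa x, hx, by simp⟩

lemma memUnboxb {s : Finset Fm} {x : Fm} : x ∈ unboxb s ↔ boxb x ∈ s := by
  constructor
  · intro hx
    rcases Finset.mem_biUnion.1 hx with ⟨φ, hφ, hm⟩
    cases φ <;> simp_all
  · intro hx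
    exact Finset.mem_biUnion.2 ⟨boxb x, hx, by simp⟩

lemma unboxbMono {s t : Finset Fm} (hst : s ⊆ t) : unboxb s ⊆ unboxb t :=
  fun x hx => memUnboxb.2 (hst (memUnboxb.1 hx))

/-- The "intrinsic" part of the CCS conditions: saturation and consistency. -/
def SatC (x : Finset Fm) : Prop :=
  (∀ φ ψ : Fm, conj φ ψ ∈ x → φ ∈ x ∧ ψ ∈ x) ∧
  (∀ φ ψ : Fm, neg (conj φ ψ) ∈ x → neg φ ∈ x ∨ neg ψ ∈ x) ∧
  (∀ φ : Fm, neg (neg φ) ∈ x → φ ∈ x) ∧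
  bot ∉ x ∧
  (∀ φ : Fm, neg φ ∈ x → φ ∉ x)

lemma satC_of_CCS {u x : Finset Fm} (hx : x ∈ CCS u) : SatC x :=
  ⟨hx.2.2.1, hx.2.2.2.1, hx.2.2.2.2.1, hx.2.2.2.2.2.1, hx.2.2.2.2.2.2⟩

lemma CSF_deg {u : Finset Fm} {N : ℕ} (hu : ∀ φ ∈ u, deg φ + 1 ≤ N) :
    ∀ {x : Fm}, CSF u x → deg x + 1 ≤ N := by
  intro x hx
  induction hx with
  | base hm => exact hu _ hm
  | @andl φ ψ _ ih =>
      simp only [deg] at ih ⊢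
      exact le_trans (Nat.add_le_add_right (le_max_left _ _) 1) ih
  | @andr φ ψ _ ih =>
      simp only [deg] at ih ⊢
      exact le_trans (Nat.add_le_add_right (le_max_right _ _) 1) ih
  | @nandl φ ψ _ ih =>
      simp only [deg] at ih ⊢
      exact le_trans (Nat.add_le_add_right (le_max_left _ _) 1) ih
  | @nandr φ ψ _ ih =>
      simp only [deg] at ih ⊢
      exact le_trans (Nat.add_le_add_right (le_max_right _ _) 1) ih
  | @negE φ _ ih =>
      simp only [deg] at ih ⊢
      exact ih

/-- Closure of `u` inside the "host" `H`, with nand-witnesses mimicking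
those of the "previous" set `P` whenever possible. -/
inductive ClP (u H P : Finset Fm) : Fm → Prop
  | base {φ} : φ ∈ u → ClP u H P φ
  | andl {φ ψ} : ClP u H P (conj φ ψ) → ClP u H P φ
  | andr {φ ψ} : ClP u H P (conj φ ψ) → ClP u H P ψ
  | nn {φ} : ClP u H P (neg (neg φ)) → ClP u H P φ
  | witPl {φ ψ} : ClP u H P (neg (conj φ ψ)) → neg (conj φ ψ) ∈ P → neg φ ∈ P →
      ClP u H P (neg φ)
  | witPr {φ ψ} : ClP u H P (neg (conj φ ψ)) → neg (conj φ ψ) ∈ P → neg ψ ∈ P →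
      ClP u H P (neg ψ)
  | witHl {φ ψ} : ClP u H P (neg (conj φ ψ)) → neg (conj φ ψ) ∉ P → neg φ ∈ H →
      ClP u H P (neg φ)
  | witHr {φ ψ} : ClP u H P (neg (conj φ ψ)) → neg (conj φ ψ) ∉ P → neg ψ ∈ H →
      ClP u H P (neg ψ)

noncomputable def clFin (u H P : Finset Fm) : Finset Fm :=
  @Finset.filter _ (fun x => ClP u H P x) (Classical.decPred _) H

lemma mem_clFin {u H P : Finset Fm} {x : Fm} :
    x ∈ clFin u H P ↔ x ∈ H ∧ ClP u H P x :=
  @Finset.mem_filter _ (fun y => ClP u H P y) (Classical.decPred _) H x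

lemma ClP_mem_host {u H P : Finset Fm} (hH : SatC H) (hu : u ⊆ H) (hP : P ⊆ H) :
    ∀ {x : Fm}, ClP u H P x → x ∈ H := by
  intro x hx
  induction hx with
  | base hm => exact hu hm
  | andl _ ih => exact (hH.1 _ _ ih).1
  | andr _ ih => exact (hH.1 _ _ ih).2
  | nn _ ih => exact hH.2.2.1 _ ih
  | witPl _ _ hw _ => exact hP hw
  | witPr _ _ hw _ => exact hP hw
  | witHl _ _ hw _ => exact hw
  | witHr _ _ hw _ => exact hw

lemma ClP_CSF {u H P : Finset Fm} : ∀ {x : Fm}, ClP u H P x → CSF u x := by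
  intro x hx
  induction hx with
  | base hm => exact CSF.base hm
  | andl _ ih => exact CSF.andl ih
  | andr _ ih => exact CSF.andr ih
  | nn _ ih => exact CSF.negE (CSF.negE ih)
  | witPl _ _ _ ih => exact CSF.nandl ih
  | witPr _ _ _ ih => exact CSF.nandr ih
  | witHl _ _ _ ih => exact CSF.nandl ih
  | witHr _ _ _ ih => exact CSF.nandr ih

lemma clFin_mem_CCS {u H P : Finset Fm} (hH : SatC H) (hu : u ⊆ H) (hP : P ⊆ H)
    (hPw : ∀ φ ψ : Fm, neg (conj φ ψ) ∈ P → neg φ ∈ P ∨ neg ψ ∈ P) :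
    clFin u H P ∈ CCS u := by
  have hhost : ∀ x : Fm, ClP u H P x → x ∈ H := fun x hx => ClP_mem_host hH hu hP hx
  have hmem : ∀ x : Fm, x ∈ clFin u H P ↔ ClP u H P x :=
    fun x => ⟨fun hx => (mem_clFin.1 hx).2, fun hx => mem_clFin.2 ⟨hhost x hx, hx⟩⟩
  refine ⟨?_, ?_, ?_, ?_, ?_, ?_, ?_⟩
  · intro x hx
    exact (hmem x).2 (ClP.base hx)
  · intro φ hφ
    exact ClP_CSF ((hmem φ).1 hφ)
  · intro φ ψ hc
    have hcc := (hmem _).1 hc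
    exact ⟨(hmem φ).2 (ClP.andl hcc), (hmem ψ).2 (ClP.andr hcc)⟩
  · intro φ ψ hc
    have hz := (hmem _).1 hc
    by_cases hzP : neg (conj φ ψ) ∈ P
    · rcases hPw φ ψ hzP with hwit | hwit
      · exact Or.inl ((hmem _).2 (ClP.witPl hz hzP hwit))
      · exact Or.inr ((hmem _).2 (ClP.witPr hz hzP hwit))
    · rcases hH.2.1 φ ψ (hhost _ hz) with hwit | hwit
      · exact Or.inl ((hmem _).2 (ClP.witHl hz hzP hwit))
      · exact Or.inr ((hmem _).2 (ClP.witHr hz hzP hwit))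
  · intro φ hφ
    exact (hmem φ).2 (ClP.nn ((hmem _).1 hφ))
  · intro hb
    exact hH.2.2.2.1 (hhost _ ((hmem _).1 hb))
  · intro φ hφ hφ2
    exact hH.2.2.2.2 φ (hhost _ ((hmem _).1 hφ)) (hhost _ ((hmem _).1 hφ2))

lemma ClP_mono {u u' H H' P P' : Finset Fm} (hu : u ⊆ u')
    (hsub : ∀ y : Fm, ClP u H P y → y ∈ P') :
    ∀ {x : Fm}, ClP u H P x → ClP u' H' P' x := by
  intro x hx
  induction hx with
  | base hm => exact ClP.base (hu hm)
  | andl _ ih => exact ClP.andl ih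
  | andr _ ih => exact ClP.andr ih
  | nn _ ih => exact ClP.nn ih
  | witPl h1 h2 h3 ih => exact ClP.witPl ih (hsub _ h1) (hsub _ (ClP.witPl h1 h2 h3))
  | witPr h1 h2 h3 ih => exact ClP.witPr ih (hsub _ h1) (hsub _ (ClP.witPr h1 h2 h3))
  | witHl h1 h2 h3 ih => exact ClP.witPl ih (hsub _ h1) (hsub _ (ClP.witHl h1 h2 h3))
  | witHr h1 h2 h3 ih => exact ClP.witPr ih (hsub _ h1) (hsub _ (ClP.witHr h1 h2 h3))

lemma ClP_deg_core {A Bs D H2 : Finset Fm} {k M : ℕ}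
    (hAD : A ⊆ D) (hsat : SatC D)
    (hBC : ∀ φ ∈ Bs, φ ∈ D ∨ deg φ + M ≤ k) :
    ∀ x : Fm, ClP (A ∪ Bs) H2 D x → (x ∈ D ∨ deg x + M ≤ k) := by
  intro x hx
  induction hx with
  | base hm =>
      rcases Finset.mem_union.1 hm with hm | hm
      · exact Or.inl (hAD hm)
      · exact hBC _ hm
  | @andl φ ψ _ ih =>
      rcases ih with hm | hm
      · exact Or.inl ((hsat.1 _ _ hm).1)
      · right
        simp only [deg] at hm
        exact le_trans (Nat.add_le_add_right (le_max_left _ _) M) hm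
  | @andr φ ψ _ ih =>
      rcases ih with hm | hm
      · exact Or.inl ((hsat.1 _ _ hm).2)
      · right
        simp only [deg] at hm
        exact le_trans (Nat.add_le_add_right (le_max_right _ _) M) hm
  | nn _ ih =>
      rcases ih with hm | hm
      · exact Or.inl (hsat.2.2.1 _ hm)
      · right
        simp only [deg] at hm ⊢
        exact hm
  | witPl _ _ h3 _ => exact Or.inl h3
  | witPr _ _ h3 _ => exact Or.inl h3
  | @witHl φ ψ _ h2 _ ih =>
      rcases ih with hm | hm
      · exact absurd hm h2
      · right
        simp only [deg] at hm ⊢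
        exact le_trans (Nat.add_le_add_right (le_max_left _ _) M) hm
  | @witHr φ ψ _ h2 _ ih =>
      rcases ih with hm | hm
      · exact absurd hm h2
      · right
        simp only [deg] at hm ⊢
        exact le_trans (Nat.add_le_add_right (le_max_right _ _) M) hm

/-- The iterated refinement sets used to build the ∞-window. -/
noncomputable def DDw (A : Finset Fm) (S : ℕ → ℕ → Finset Fm) (k : ℕ) :
    ℕ → ℕ → Finset Fm :=
  fun r =>
    Nat.rec (motive := fun _ => ℕ → Finset Fm)
      (fun t => clFin A (S t k) ∅)
      (fun r ih t => clFin (A ∪ unboxb (ih (t + 1))) (S (t + r + 1) (k - r - 1)) (ih t)) r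

/-- The base set over which `DDw` is a CCS. -/
noncomputable def DbW (A : Finset Fm) (S : ℕ → ℕ → Finset Fm) (k : ℕ) :
    ℕ → ℕ → Finset Fm :=
  fun r t =>
    Nat.rec (motive := fun _ => Finset Fm)
      A (fun r _ => A ∪ unboxb (DDw A S k r (t + 1))) r

lemma mem_DDw_zero (A : Finset Fm) (S : ℕ → ℕ → Finset Fm) (k t : ℕ) (x : Fm) :
    x ∈ DDw A S k 0 t ↔ x ∈ S t k ∧ ClP A (S t k) ∅ x :=
  @Finset.mem_filter _ (fun y => ClP A (S t k) ∅ y) (Classical.decPred _) (S t k) x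

lemma mem_DDw_succ (A : Finset Fm) (S : ℕ → ℕ → Finset Fm) (k r t : ℕ) (x : Fm) :
    x ∈ DDw A S k (r + 1) t ↔ x ∈ S (t + r + 1) (k - r - 1) ∧
      ClP (A ∪ unboxb (DDw A S k r (t + 1))) (S (t + r + 1) (k - r - 1)) (DDw A S k r t) x :=
  @Finset.mem_filter _
    (fun y => ClP (A ∪ unboxb (DDw A S k r (t + 1))) (S (t + r + 1) (k - r - 1))
      (DDw A S k r t) y)
    (Classical.decPred _) (S (t + r + 1) (k - r - 1)) x

lemma DDw_host (A : Finset Fm) (S : ℕ → ℕ → Finset Fm) (k : ℕ) :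
    ∀ r t, DDw A S k r t ⊆ S (t + r) (k - r) := by
  intro r t
  cases r with
  | zero => exact @Finset.filter_subset _ _ (Classical.decPred _) _
  | succ r => exact @Finset.filter_subset _ _ (Classical.decPred _) _

/-- if `(T 0, …, T m)` is a finite sequence of `d(w)`-windows
for the CCS `w`, each `T (i+1)` a continuation of `T i` for `w`, and
`T h = T (h + δ)` for some `δ ≥ 1` with `h + δ ≤ m`, then there is an
∞-window for `w`. -/
theorem stmt11 (w : Finset Fm) (hw : w ∈ CCS w) (m : ℕ)
    (T : ℕ → ℕ → Finset Fm)
    (hwin : ∀ i ≤ m, IsWindow w (degS w) (T i))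
    (hcont : ∀ i < m, ∀ j < degS w,
      T (i + 1) j ∈ CCS (unboxb (T (i + 1) (j + 1)) ∪ T i (j + 1)))
    (h δ : ℕ) (hδ : 1 ≤ δ) (hm : h + δ ≤ m)
    (heq : ∀ j ≤ degS w, T h j = T (h + δ) j) :
    ∃ tw : ℕ → Finset Fm,
      ∀ i, tw i ∈ CCS (unboxa w ∪ unboxb (tw (i + 1))) := by
  classical
  set k := degS w with hkk
  set A := unboxa w with hAA
  have hAdeg : ∀ φ ∈ A, deg φ + 1 ≤ k := by
    intro φ hφ
    rw [hAA] at hφ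
    have hb : boxa φ ∈ w := memUnboxa.1 hφ
    have hd : deg (boxa φ) ≤ degS w := Finset.le_sup hb
    rw [← hkk] at hd
    simp only [deg] at hd
    exact hd
  by_cases hk0 : k = 0
  · -- degenerate case: no boxes at all, the constant empty sequence works
    have hAe : A = ∅ := by
      rw [Finset.eq_empty_iff_forall_notMem]
      intro φ hφ
      have := hAdeg φ hφ
      omega
    refine ⟨fun _ => ∅, fun i => ?_⟩
    show (∅ : Finset Fm) ∈ CCS (A ∪ unboxb (∅ : Finset Fm))
    have hub : unboxb (∅ : Finset Fm) = ∅ := by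
      rw [Finset.eq_empty_iff_forall_notMem]
      intro x hx
      exact (Finset.notMem_empty _) (memUnboxb.1 hx)
    rw [hAe, hub, Finset.empty_union]
    exact ⟨Finset.empty_subset _,
      fun φ hφ => absurd hφ (Finset.notMem_empty _),
      fun φ ψ hφψ => absurd hφψ (Finset.notMem_empty _),
      fun φ ψ hφψ => absurd hφψ (Finset.notMem_empty _),
      fun φ hφ => absurd hφ (Finset.notMem_empty _),
      Finset.notMem_empty _,
      fun φ hφ => absurd hφ (Finset.notMem_empty _)⟩
  · have hk1 : 1 ≤ k := by omega
    -- the periodic extension of the looping window sequence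
    set S : ℕ → ℕ → Finset Fm := fun n j => T (h + n % δ) j with hS
    have hle : ∀ n : ℕ, h + n % δ ≤ m := by
      intro n
      have h1 : n % δ < δ := Nat.mod_lt _ (by omega)
      omega
    have W1 : ∀ n, S n k ∈ CCS A := by
      intro n
      have hh := (hwin (h + n % δ) (hle n)).1
      rw [← hAA] at hh
      simp only [hS]
      exact hh
    have W2 : ∀ n j, j < k → S n j ∈ CCS (A ∪ unboxb (S n (j + 1))) := by
      intro n j hj
      have hh := (hwin (h + n % δ) (hle n)).2 j hj
      rw [← hAA] at hh
      simp only [hS]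
      exact hh
    have C : ∀ n j, j < k →
        S (n + 1) j ∈ CCS (unboxb (S (n + 1) (j + 1)) ∪ S n (j + 1)) := by
      intro n j hj
      have hdlt : n % δ < δ := Nat.mod_lt _ (by omega)
      by_cases hcase : n % δ + 1 = δ
      · have h1 : (n + 1) % δ = 0 := by
          rw [← Nat.mod_add_mod, hcase, Nat.mod_self]
        have hi : h + δ - 1 < m := by omega
        have hc := hcont (h + δ - 1) hi j hj
        have hi1 : h + δ - 1 + 1 = h + δ := by omega
        rw [hi1] at hc
        have e3 : h + n % δ = h + δ - 1 := by omega
        simp only [hS]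
        rw [h1, Nat.add_zero, e3]
        rw [heq j (le_of_lt hj), heq (j + 1) hj]
        exact hc
      · have h1 : (n + 1) % δ = n % δ + 1 := by
          rw [← Nat.mod_add_mod]
          exact Nat.mod_eq_of_lt (by omega)
        have hi : h + n % δ < m := by omega
        have hc := hcont (h + n % δ) hi j hj
        simp only [hS]
        rw [h1]
        have e4 : h + (n % δ + 1) = h + n % δ + 1 := by omega
        rw [e4]
        exact hc
    -- basic structural facts about the window components
    have Bedge : ∀ n j, j < k → unboxb (S n (j + 1)) ⊆ S n j :=
      fun n j hj x hx => (W2 n j hj).1 (Finset.mem_union_right _ hx)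
    have Refin : ∀ n j, j < k → S n (j + 1) ⊆ S (n + 1) j :=
      fun n j hj x hx => (C n j hj).1 (Finset.mem_union_right _ hx)
    have SatS : ∀ n j, j ≤ k → SatC (S n j) := by
      intro n j hj
      rcases lt_or_eq_of_le hj with hlt | heqj
      · exact satC_of_CCS (W2 n j hlt)
      · rw [heqj]; exact satC_of_CCS (W1 n)
    have AsubS : ∀ n j, j ≤ k → A ⊆ S n j := by
      intro n j hj
      rcases lt_or_eq_of_le hj with hlt | heqj
      · exact fun x hx => (W2 n j hlt).1 (Finset.mem_union_left _ hx)
      · rw [heqj]; exact (W1 n).1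
    -- hosting facts for the refinement sets
    have hostsub : ∀ r, r + 1 ≤ k → ∀ t,
        A ∪ unboxb (DDw A S k r (t + 1)) ⊆ S (t + r + 1) (k - r - 1) := by
      intro r hr t
      refine Finset.union_subset (AsubS (t + r + 1) (k - r - 1) (by omega)) ?_
      have h1 : DDw A S k r (t + 1) ⊆ S (t + 1 + r) (k - r) := DDw_host A S k r (t + 1)
      have h2 := Bedge (t + r + 1) (k - r - 1) (by omega)
      have e : k - r - 1 + 1 = k - r := by omega
      rw [e] at h2
      have e2 : t + 1 + r = t + r + 1 := by omega
      rw [e2] at h1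
      exact (unboxbMono h1).trans h2
    have Psub : ∀ r, r + 1 ≤ k → ∀ t, DDw A S k r t ⊆ S (t + r + 1) (k - r - 1) := by
      intro r hr t
      have h1 := DDw_host A S k r t
      have h2 := Refin (t + r) (k - r - 1) (by omega)
      have e : k - r - 1 + 1 = k - r := by omega
      rw [e] at h2
      exact h1.trans h2
    -- each refinement set is a CCS over its base
    have DD_CCS : ∀ r, r ≤ k → ∀ t, DDw A S k r t ∈ CCS (DbW A S k r t) := by
      intro r
      induction r with
      | zero =>
          intro _ t
          show clFin A (S t k) ∅ ∈ CCS A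
          exact clFin_mem_CCS (SatS t k le_rfl) (AsubS t k le_rfl)
            (Finset.empty_subset _)
            (fun φ ψ habs => absurd habs (Finset.notMem_empty _))
      | succ r ih =>
          intro hr t
          have hsatP : SatC (DDw A S k r t) := satC_of_CCS (ih (by omega) t)
          show clFin (A ∪ unboxb (DDw A S k r (t + 1))) (S (t + r + 1) (k - r - 1))
              (DDw A S k r t) ∈ CCS (A ∪ unboxb (DDw A S k r (t + 1)))
          exact clFin_mem_CCS (SatS (t + r + 1) (k - r - 1) (by omega))
            (hostsub r hr t) (Psub r hr t)
            (fun φ ψ hmem => hsatP.2.1 φ ψ hmem)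
    have hSatDD : ∀ r, r ≤ k → ∀ t, SatC (DDw A S k r t) :=
      fun r hr t => satC_of_CCS (DD_CCS r hr t)
    have hADD : ∀ r, r ≤ k → ∀ t, A ⊆ DDw A S k r t := by
      intro r hr t
      cases r with
      | zero => exact (DD_CCS 0 hr t).1
      | succ r => exact fun x hx => (DD_CCS (r + 1) hr t).1 (Finset.mem_union_left _ hx)
    have ClP_to_mem : ∀ r, r + 1 ≤ k → ∀ t x,
        ClP (A ∪ unboxb (DDw A S k r (t + 1))) (S (t + r + 1) (k - r - 1))
          (DDw A S k r t) x → x ∈ DDw A S k (r + 1) t := by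
      intro r hr t x hx
      exact (mem_DDw_succ A S k r t x).2
        ⟨ClP_mem_host (SatS (t + r + 1) (k - r - 1) (by omega)) (hostsub r hr t)
          (Psub r hr t) hx, hx⟩
    -- monotonicity of refinement
    have DD_mono : ∀ r, r + 1 ≤ k → ∀ t, DDw A S k r t ⊆ DDw A S k (r + 1) t := by
      intro r
      induction r with
      | zero =>
          intro hr t x hx
          have hclp := ((mem_DDw_zero A S k t x).1 hx).2
          refine ClP_to_mem 0 hr t x ?_
          refine ClP_mono Finset.subset_union_left (fun y hy => ?_) hclp
          exact (mem_DDw_zero A S k t y).2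
            ⟨ClP_mem_host (SatS t k le_rfl) (AsubS t k le_rfl) (Finset.empty_subset _) hy, hy⟩
      | succ r ih =>
          intro hr t x hx
          have hclp := ((mem_DDw_succ A S k r t x).1 hx).2
          refine ClP_to_mem (r + 1) hr t x ?_
          exact ClP_mono
            (Finset.union_subset_union (Finset.Subset.refl A)
              (unboxbMono (ih (by omega) (t + 1))))
            (fun y hy => ClP_to_mem r (by omega) t y hy) hclp
    -- the degree bound: new material loses one degree per refinement round
    have DD_deg : ∀ r, r + 1 ≤ k → ∀ t x, x ∈ DDw A S k (r + 1) t →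
        (x ∈ DDw A S k r t ∨ deg x + (r + 2) ≤ k) := by
      intro r
      induction r with
      | zero =>
          intro hr t x hx
          have hclp := ((mem_DDw_succ A S k 0 t x).1 hx).2
          refine ClP_deg_core (hADD 0 (by omega) t) (hSatDD 0 (by omega) t) ?_ x hclp
          intro φ hφ
          have hbox : boxb φ ∈ DDw A S k 0 (t + 1) := memUnboxb.1 hφ
          have hCSF : CSF A (boxb φ) := (DD_CCS 0 (by omega) (t + 1)).2.1 _ hbox
          have hdeg := CSF_deg hAdeg hCSF
          right
          simp only [deg] at hdeg
          omega
      | succ r' ih =>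
          intro hr t x hx
          have hclp := ((mem_DDw_succ A S k (r' + 1) t x).1 hx).2
          refine ClP_deg_core (hADD (r' + 1) (by omega) t) (hSatDD (r' + 1) (by omega) t)
            ?_ x hclp
          intro φ hφ
          have hbox : boxb φ ∈ DDw A S k (r' + 1) (t + 1) := memUnboxb.1 hφ
          rcases ih (by omega) (t + 1) (boxb φ) hbox with hmb | hmb
          · left
            have hb : A ∪ unboxb (DDw A S k r' (t + 1)) ⊆ DDw A S k (r' + 1) t :=
              (DD_CCS (r' + 1) (by omega) t).1
            exact hb (Finset.mem_union_right _ (memUnboxb.2 hmb))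
          · right
            simp only [deg] at hmb
            omega
    -- conclusion: the `k`-th refinements form an ∞-window
    refine ⟨fun i => DDw A S k k i, fun i => ?_⟩
    show DDw A S k k i ∈ CCS (A ∪ unboxb (DDw A S k k (i + 1)))
    have e1 : k - 1 + 1 = k := by omega
    have hstep : DDw A S k (k - 1 + 1) i ∈
        CCS (A ∪ unboxb (DDw A S k (k - 1) (i + 1))) :=
      DD_CCS (k - 1 + 1) (by omega) i
    have hsub1 : DDw A S k (k - 1) (i + 1) ⊆ DDw A S k (k - 1 + 1) (i + 1) :=
      DD_mono (k - 1) (by omega) (i + 1)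
    have hsub2 : DDw A S k (k - 1 + 1) (i + 1) ⊆ DDw A S k (k - 1) (i + 1) := by
      intro x hx
      rcases DD_deg (k - 1) (by omega) (i + 1) x hx with hmm | hmm
      · exact hmm
      · exfalso; omega
    have heqD : DDw A S k (k - 1) (i + 1) = DDw A S k (k - 1 + 1) (i + 1) :=
      Finset.Subset.antisymm hsub1 hsub2
    rw [e1] at hstep heqD
    rw [← heqD]
    exact hstep
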